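/- Let F₂ be the free group on two generators x and y, let γ = x·y·x⁻¹·y⁻¹, and let Q be the quotient of ℤ[F₂] by the additive subgroup generated by all elements [g] − [γᵃ·g·γᵇ] (g ∈ F₂, a, b ∈ ℤ), all elements [g] − [g⁻¹] (g ∈ F₂), the element [1], and all elements [g] − [g·x⁻¹] + [g·x⁻¹·y⁻¹] − [g·y⁻¹] (g ∈ F₂). Then in Q the images of the basis elements [x·y], [y·x], and [x·y⁻¹] are all equal, and each equals the sum of the images of [x] and [y]. -/

import Mathlib

noncomputable section

/-- The free group on two generators `x` and `y`. -/
abbrev F2 := FreeGroup (Fin 2)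

/-- The generator `x`. -/
def x : F2 := FreeGroup.of 0

/-- The generator `y`. -/
def y : F2 := FreeGroup.of 1

/-- The commutator `γ = x·y·x⁻¹·y⁻¹`. -/
def γ : F2 := x * y * x⁻¹ * y⁻¹

/-- The basis element `[g]` of the free abelian group `ℤ[F₂]`. -/
def e (g : F2) : F2 →₀ ℤ := Finsupp.single g 1

/-- The additive subgroup of `ℤ[F₂]` generated by all `[g] − [γᵃ·g·γᵇ]`,
all `[g] − [g⁻¹]`, the element `[1]`, and all
`[g] − [g·x⁻¹] + [g·x⁻¹·y⁻¹] − [g·y⁻¹]`. -/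
def qRel : AddSubgroup (F2 →₀ ℤ) :=
  AddSubgroup.closure
    ({v | ∃ (g : F2) (a b : ℤ), v = e g - e (γ ^ a * g * γ ^ b)} ∪
      {v | ∃ g : F2, v = e g - e g⁻¹} ∪ {e (1 : F2)} ∪
      {v | ∃ g : F2, v = e g - e (g * x⁻¹) + e (g * x⁻¹ * y⁻¹) - e (g * y⁻¹)})

/-- The paper's target group `Λ̃_{[x,y]}/Φ(k)`. -/
abbrev Q := (F2 →₀ ℤ) ⧸ qRel

/-!
Two relations do all the work. Since `x·y = γ·(y·x)` and `x·y·x⁻¹ = γ·y`, the relation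
`[g] = [γ·g]` identifies `[x·y]` with `[y·x]` and `[x·y·x⁻¹]` with `[y]`, and makes `[γ] = [1]`
vanish. The four-term relation at `g = x·y` then reads `[x·y] − [y] + [γ] − [x] = 0`, and at
`g = x` it reads `[x] − [1] + [y⁻¹] − [x·y⁻¹] = 0`, where `[y⁻¹] = [y]`.
-/

open QuotientAddGroup

lemma mk_e_gamma_zpow_mul_zpow (g : F2) (a b : ℤ) :
    (mk (e (γ ^ a * g * γ ^ b)) : Q) = mk (e g) := by
  refine (eq_iff_sub_mem.2 (AddSubgroup.subset_closure ?_)).symm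
  exact Or.inl (Or.inl (Or.inl ⟨g, a, b, rfl⟩))

lemma mk_e_inv (g : F2) : (mk (e g⁻¹) : Q) = mk (e g) := by
  refine (eq_iff_sub_mem.2 (AddSubgroup.subset_closure ?_)).symm
  exact Or.inl (Or.inl (Or.inr ⟨g, rfl⟩))

lemma mk_e_one : (mk (e 1) : Q) = 0 :=
  (eq_zero_iff _).2 (AddSubgroup.subset_closure (Or.inl (Or.inr rfl)))

lemma mk_e_sub_add_sub (g : F2) :
    (mk (e g) : Q) - mk (e (g * x⁻¹)) + mk (e (g * x⁻¹ * y⁻¹)) - mk (e (g * y⁻¹)) = 0 :=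
  (eq_zero_iff _).2 (AddSubgroup.subset_closure (Or.inr ⟨g, rfl⟩))

lemma mk_e_gamma_mul (g : F2) : (mk (e (γ * g)) : Q) = mk (e g) := by
  simpa using mk_e_gamma_zpow_mul_zpow g 1 0

lemma mk_e_gamma : (mk (e γ) : Q) = 0 := by
  simpa [mk_e_one] using mk_e_gamma_mul 1

lemma mul_eq_gamma_mul_mul : x * y = γ * (y * x) := by
  simp only [γ]; group

lemma mul_mul_inv_eq_gamma_mul : x * y * x⁻¹ = γ * y := by
  simp only [γ]; group

lemma mk_e_mul_eq_add : (mk (e (x * y)) : Q) = mk (e x) + mk (e y) := by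
  have h := mk_e_sub_add_sub (x * y)
  rw [mul_mul_inv_eq_gamma_mul, mul_inv_cancel_right, mul_inv_cancel_right, mk_e_gamma_mul,
    mk_e_gamma] at h
  rw [← sub_eq_zero, ← h]
  abel

lemma mk_e_mul_inv_eq_add : (mk (e (x * y⁻¹)) : Q) = mk (e x) + mk (e y) := by
  have h := mk_e_sub_add_sub x
  rw [mul_inv_cancel, one_mul, mk_e_one, mk_e_inv] at h
  rw [← sub_eq_zero, ← neg_eq_zero, ← h]
  abel

theorem stmt16 :
    (QuotientAddGroup.mk (e (x * y)) : Q) = QuotientAddGroup.mk (e (y * x)) ∧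
    (QuotientAddGroup.mk (e (x * y)) : Q) = QuotientAddGroup.mk (e (x * y⁻¹)) ∧
    (QuotientAddGroup.mk (e (x * y)) : Q) =
      QuotientAddGroup.mk (e x) + QuotientAddGroup.mk (e y) := by
  refine ⟨?_, ?_, mk_e_mul_eq_add⟩
  · rw [mul_eq_gamma_mul_mul, mk_e_gamma_mul]
  · rw [mk_e_mul_eq_add, mk_e_mul_inv_eq_add]
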